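/- arXiv:1910.03309 — 5 statements merged into one kernel-verified Lean document; each statement's English description precedes it below -/
import Mathlib

section
/- If K is an n×n skew-symmetric real matrix, D an m×m diagonal invertible real matrix, B an m×n real matrix of rank n, L an n×1 real vector, and λ = K·L, A = K·Bᵀ·D, then the function H(x) = Σ_{i=1}^m D_{ii} Π_{k=1}^n x_k^{B_{ik}} + Σ_{j=1}^n L_j ln x_j is a constant of motion for the system ẋ_i = x_i(λ_i + Σ_{j=1}^m A_{ij} Π_{k=1}^n x_k^{B_{jk}}) on the open positive orthant; i.e., the gradient of H is orthogonal to the vector field at every point of the positive orthant. -/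
/-!
With `P(x)` the vector of quasimonomials and `w = Bᵀ (d ⊙ P(x)) + L`, the logarithmic gradient of
`H` is `x_i ∂_i H(x) = w_i`, while the vector field is `F_i(x) = x_i (K w)_i` because
`λ + A P(x) = K (L + Bᵀ D P(x))`. Hence `∇H · F = wᵀ K w`, which vanishes as `K` is skew-symmetric.
-/

open Real Finset Matrix

theorem Matrix.dotProduct_mulVec_self_eq_zero_of_transpose_eq_neg {ι R : Type*} [Fintype ι]
    [CommRing R] [NoZeroDivisors R] [CharZero R] {K : Matrix ι ι R} (hK : Kᵀ = -K) (w : ι → R) :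
    w ⬝ᵥ K *ᵥ w = 0 := by
  have h : w ⬝ᵥ K *ᵥ w = -(w ⬝ᵥ K *ᵥ w) := by
    conv_lhs => rw [dotProduct_mulVec, ← transpose_transpose K, vecMul_transpose, hK]
    rw [neg_mulVec, neg_dotProduct, dotProduct_comm]
  exact self_eq_neg.mp h

theorem Matrix.mulVec_add_mul_transpose_mul_diagonal_mulVec {ι κ R : Type*} [Fintype ι]
    [Fintype κ] [DecidableEq κ] [CommSemiring R] (K : Matrix ι ι R) (B : Matrix κ ι R)
    (d v : κ → R) (L : ι → R) :
    K *ᵥ L + (K * Bᵀ * diagonal d) *ᵥ v = K *ᵥ (Bᵀ *ᵥ (d * v) + L) := by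
  rw [mulVec_add, ← mulVec_mulVec, ← mulVec_mulVec, add_comm]
  congr 3
  ext j
  exact mulVec_diagonal d v j

section

variable {ι κ : Type*} [Fintype ι] [Fintype κ]

noncomputable def quasimonomial (B : Matrix κ ι ℝ) (x : ι → ℝ) : κ → ℝ :=
  fun j => ∏ k, x k ^ B j k

theorem hasFDerivAt_sum_mul_log (L : ι → ℝ) {x : ι → ℝ} (hx : ∀ k, x k ≠ 0) :
    HasFDerivAt (fun y : ι → ℝ => ∑ k, L k * Real.log (y k))
      (∑ k, (L k / x k) • (ContinuousLinearMap.proj k : (ι → ℝ) →L[ℝ] ℝ)) x :=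
  (HasFDerivAt.fun_sum fun k _ => ((hasFDerivAt_apply k x).log (hx k)).const_mul (L k)).congr_fderiv
    (sum_congr rfl fun k _ => by rw [smul_smul, div_eq_mul_inv])

variable [DecidableEq ι]

theorem hasFDerivAt_prod_rpow (b : ι → ℝ) {x : ι → ℝ} (hx : ∀ k, 0 < x k) :
    HasFDerivAt (fun y : ι → ℝ => ∏ k, y k ^ b k)
      (∑ k, (b k * (∏ l, x l ^ b l) / x k) •
        (ContinuousLinearMap.proj k : (ι → ℝ) →L[ℝ] ℝ)) x := by
  refine (HasFDerivAt.finsetProd (u := univ) fun k _ =>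
    (hasFDerivAt_apply k x).rpow_const (p := b k) (Or.inl (hx k).ne')).congr_fderiv
    (sum_congr rfl fun k _ => ?_)
  rw [smul_smul, ← prod_erase_mul univ _ (mem_univ k), rpow_sub (hx k), rpow_one]
  congr 1
  field_simp

theorem mul_fderiv_sum_quasimonomial_add_log_apply_single (d : κ → ℝ) (B : Matrix κ ι ℝ)
    (L : ι → ℝ) {x : ι → ℝ} (hx : ∀ k, 0 < x k) (i : ι) :
    x i * fderiv ℝ (fun y => (∑ j, d j * quasimonomial B y j) + ∑ k, L k * Real.log (y k)) x
      (Pi.single i 1) = (Bᵀ *ᵥ (d * quasimonomial B x) + L) i := by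
  have hH : HasFDerivAt
      (fun y => (∑ j, d j * quasimonomial B y j) + ∑ k, L k * Real.log (y k)) _ x :=
    (HasFDerivAt.fun_sum fun j _ => (hasFDerivAt_prod_rpow (B j) hx).const_mul (d j)).fun_add
    (hasFDerivAt_sum_mul_log L fun k => (hx k).ne')
  rw [hH.fderiv]
  have hxi : x i ≠ 0 := (hx i).ne'
  simp only [_root_.add_apply, _root_.sum_apply, _root_.smul_apply, ContinuousLinearMap.proj_apply,
    Pi.single_apply, smul_eq_mul, mul_ite, mul_one, mul_zero, sum_ite_eq', mem_univ, ↓reduceIte,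
    mul_add, mul_sum, Pi.add_apply, mulVec, dotProduct, transpose_apply, Pi.mul_apply,
    quasimonomial]
  field_simp
  simp only [mul_comm (d _)]

end

theorem qpp_constant_of_motion_general (n m : ℕ)
    (K : Matrix (Fin n) (Fin n) ℝ) (hK : Kᵀ = -K)
    (d : Fin m → ℝ)
    (B : Matrix (Fin m) (Fin n) ℝ)
    (L : Fin n → ℝ)
    (lam : Fin n → ℝ) (hlam : lam = K.mulVec L)
    (A : Matrix (Fin n) (Fin m) ℝ) (hA : A = K * Bᵀ * Matrix.diagonal d)
    (H : (Fin n → ℝ) → ℝ)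
    (hH : H = fun x => (∑ i : Fin m, d i * ∏ k : Fin n, x k ^ B i k)
        + ∑ j : Fin n, L j * Real.log (x j))
    (F : (Fin n → ℝ) → (Fin n → ℝ))
    (hF : F = fun x i => x i * (lam i + ∑ j : Fin m, A i j * ∏ k : Fin n, x k ^ B j k)) :
    ∀ x : Fin n → ℝ, (∀ i, 0 < x i) →
      ∑ i : Fin n, fderiv ℝ H x (Pi.single i 1) * F x i = 0 := by
  intro x hx
  let w := Bᵀ *ᵥ (d * quasimonomial B x) + L
  have hgrad : ∀ i, x i * fderiv ℝ H x (Pi.single i 1) = w i := by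
    rw [hH]
    exact mul_fderiv_sum_quasimonomial_add_log_apply_single d B L hx
  have hfield : ∀ i, F x i = x i * (K *ᵥ w) i := fun i => by
    rw [hF, hlam, hA]
    exact congrArg (x i * ·) (congrFun (mulVec_add_mul_transpose_mul_diagonal_mulVec K B d _ L) i)
  calc _ = ∑ i, w i * (K *ᵥ w) i := sum_congr rfl fun i _ => by rw [hfield, ← hgrad]; ring
    _ = 0 := dotProduct_mulVec_self_eq_zero_of_transpose_eq_neg hK w

theorem qpp_constant_of_motion (n m : ℕ)
    (K : Matrix (Fin n) (Fin n) ℝ) (hK : Kᵀ = -K)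
    (d : Fin m → ℝ) (hd : ∀ i, d i ≠ 0)
    (B : Matrix (Fin m) (Fin n) ℝ) (hB : B.rank = n)
    (L : Fin n → ℝ)
    (lam : Fin n → ℝ) (hlam : lam = K.mulVec L)
    (A : Matrix (Fin n) (Fin m) ℝ) (hA : A = K * Bᵀ * Matrix.diagonal d)
    (H : (Fin n → ℝ) → ℝ)
    (hH : H = fun x => (∑ i : Fin m, d i * ∏ k : Fin n, x k ^ B i k)
        + ∑ j : Fin n, L j * Real.log (x j))
    (F : (Fin n → ℝ) → (Fin n → ℝ))
    (hF : F = fun x i => x i * (lam i + ∑ j : Fin m, A i j * ∏ k : Fin n, x k ^ B j k)) :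
    ∀ x : Fin n → ℝ, (∀ i, 0 < x i) →
      ∑ i : Fin n, fderiv ℝ H x (Pi.single i 1) * F x i = 0 :=
  qpp_constant_of_motion_general n m K hK d B L lam hlam A hA H hH F hF
end

section
/- Under the conditions of Example 2, the generalized predator-prey system ẋ₁ = x₁(a - βc x₁^α x₂^β - δb x₁^γ x₂^δ), ẋ₂ = x₂(-d + αc x₁^α x₂^β + γb x₁^γ x₂^δ) with a,b,c,d,α,β,γ,δ > 0 and αδ - βγ > 0, has a fixed point in the open positive orthant if and only if δ/γ > a/d > β/α; moreover when it exists the fixed point is unique. -/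
/-!
Writing `u = c x₁^α x₂^β` and `v = b x₁^γ x₂^δ`, the fixed-point equations become the linear system
`β u + δ v = a`, `α u + γ v = d` with determinant `βγ - αδ ≠ 0`; so a fixed point exists iff the
unique solution `(u, v)` is positive, which is exactly the pair of inequalities. In logarithmic
coordinates `(x₁, x₂) ↦ (x₁^α x₂^β, x₁^γ x₂^δ)` is linear with determinant `αδ - βγ ≠ 0`, hence a
bijection of the open positive quadrant; this gives both existence and uniqueness of `(x₁, x₂)`.
-/

open Real

theorem linear_system_two_iff {K : Type*} [Field K] {α β γ δ p q s t : K}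
    (hD : α * δ - β * γ ≠ 0) :
    α * s + β * t = p ∧ γ * s + δ * t = q ↔
      s = (δ * p - β * q) / (α * δ - β * γ) ∧ t = (α * q - γ * p) / (α * δ - β * γ) := by
  rw [eq_div_iff hD, eq_div_iff hD]
  constructor
  · rintro ⟨h₁, h₂⟩
    exact ⟨by linear_combination δ * h₁ - β * h₂, by linear_combination α * h₂ - γ * h₁⟩
  · rintro ⟨hs, ht⟩
    exact ⟨mul_right_cancel₀ hD (by linear_combination α * hs + β * ht),
      mul_right_cancel₀ hD (by linear_combination γ * hs + δ * ht)⟩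

theorem rpow_mul_rpow_eq_exp {x y : ℝ} (hx : 0 < x) (hy : 0 < y) (α β : ℝ) :
    x ^ α * y ^ β = exp (α * log x + β * log y) := by
  rw [exp_add, rpow_def_of_pos hx, rpow_def_of_pos hy, mul_comm (log x), mul_comm (log y)]

section MonomialPair

variable {α β γ δ : ℝ}

theorem eq_of_rpow_mul_rpow_eq (hD : α * δ - β * γ ≠ 0) {x₁ x₂ y₁ y₂ : ℝ}
    (hx₁ : 0 < x₁) (hx₂ : 0 < x₂) (hy₁ : 0 < y₁) (hy₂ : 0 < y₂)
    (h₁ : x₁ ^ α * x₂ ^ β = y₁ ^ α * y₂ ^ β) (h₂ : x₁ ^ γ * x₂ ^ δ = y₁ ^ γ * y₂ ^ δ) :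
    x₁ = y₁ ∧ x₂ = y₂ := by
  simp only [rpow_mul_rpow_eq_exp hx₁ hx₂, rpow_mul_rpow_eq_exp hy₁ hy₂, exp_eq_exp] at h₁ h₂
  obtain ⟨hx₁', hx₂'⟩ := (linear_system_two_iff hD).1 ⟨h₁, h₂⟩
  obtain ⟨hy₁', hy₂'⟩ := (linear_system_two_iff hD).1 ⟨rfl, rfl⟩
  exact ⟨log_injOn_pos hx₁ hy₁ (hx₁'.trans hy₁'.symm), log_injOn_pos hx₂ hy₂ (hx₂'.trans hy₂'.symm)⟩

theorem exists_rpow_mul_rpow_eq (hD : α * δ - β * γ ≠ 0) {p q : ℝ} (hp : 0 < p) (hq : 0 < q) :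
    ∃ x₁ x₂ : ℝ, 0 < x₁ ∧ 0 < x₂ ∧ x₁ ^ α * x₂ ^ β = p ∧ x₁ ^ γ * x₂ ^ δ = q := by
  set s := (δ * log p - β * log q) / (α * δ - β * γ)
  set t := (α * log q - γ * log p) / (α * δ - β * γ)
  obtain ⟨h₁, h₂⟩ := (linear_system_two_iff (s := s) (t := t) hD).2 ⟨rfl, rfl⟩
  refine ⟨exp s, exp t, exp_pos s, exp_pos t, ?_, ?_⟩ <;>
    rw [rpow_mul_rpow_eq_exp (exp_pos _) (exp_pos _), log_exp, log_exp]
  · rw [h₁, exp_log hp]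
  · rw [h₂, exp_log hq]

end MonomialPair

theorem predator_prey_rhs_eq_zero_iff {a b c d α β γ δ : ℝ} (hD : α * δ - β * γ ≠ 0)
    (x₁ x₂ : ℝ) :
    (a - β * c * x₁ ^ α * x₂ ^ β - δ * b * x₁ ^ γ * x₂ ^ δ = 0 ∧
        -d + α * c * x₁ ^ α * x₂ ^ β + γ * b * x₁ ^ γ * x₂ ^ δ = 0) ↔
      c * (x₁ ^ α * x₂ ^ β) = (δ * d - γ * a) / (α * δ - β * γ) ∧
        b * (x₁ ^ γ * x₂ ^ δ) = (α * a - β * d) / (α * δ - β * γ) := by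
  rw [mul_comm β γ] at hD ⊢
  rw [← linear_system_two_iff hD]
  constructor <;> rintro ⟨h₁, h₂⟩
  · exact ⟨by linear_combination h₂, by linear_combination -h₁⟩
  · exact ⟨by linear_combination -h₂, by linear_combination h₁⟩

theorem generalized_predator_prey_fixed_point_general (a b c d α β γ δ : ℝ)
    (hb : 0 < b) (hc : 0 < c) (hd : 0 < d)
    (hα : 0 < α) (hγ : 0 < γ)
    (hdet : 0 < α * δ - β * γ) :
    ((∃ x₁ x₂ : ℝ, 0 < x₁ ∧ 0 < x₂ ∧
        a - β * c * x₁ ^ α * x₂ ^ β - δ * b * x₁ ^ γ * x₂ ^ δ = 0 ∧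
        -d + α * c * x₁ ^ α * x₂ ^ β + γ * b * x₁ ^ γ * x₂ ^ δ = 0) ↔
      (δ / γ > a / d ∧ a / d > β / α)) ∧
    (∀ x₁ x₂ y₁ y₂ : ℝ,
      0 < x₁ → 0 < x₂ →
      a - β * c * x₁ ^ α * x₂ ^ β - δ * b * x₁ ^ γ * x₂ ^ δ = 0 →
      -d + α * c * x₁ ^ α * x₂ ^ β + γ * b * x₁ ^ γ * x₂ ^ δ = 0 →
      0 < y₁ → 0 < y₂ →
      a - β * c * y₁ ^ α * y₂ ^ β - δ * b * y₁ ^ γ * y₂ ^ δ = 0 →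
      -d + α * c * y₁ ^ α * y₂ ^ β + γ * b * y₁ ^ γ * y₂ ^ δ = 0 →
      x₁ = y₁ ∧ x₂ = y₂) := by
  have hD := hdet.ne'
  have hu₀ : 0 < (δ * d - γ * a) / (α * δ - β * γ) ↔ δ / γ > a / d := by
    rw [div_pos_iff_of_pos_right hdet, sub_pos, gt_iff_lt, div_lt_div_iff₀ hd hγ]
    constructor <;> intro h <;> linarith
  have hv₀ : 0 < (α * a - β * d) / (α * δ - β * γ) ↔ a / d > β / α := by
    rw [div_pos_iff_of_pos_right hdet, sub_pos, gt_iff_lt, div_lt_div_iff₀ hα hd]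
    constructor <;> intro h <;> linarith
  refine ⟨⟨?_, ?_⟩, ?_⟩
  · rintro ⟨x₁, x₂, hx₁, hx₂, h⟩
    obtain ⟨hu, hv⟩ := (predator_prey_rhs_eq_zero_iff hD x₁ x₂).1 h
    exact ⟨hu₀.1 (hu ▸ by positivity), hv₀.1 (hv ▸ by positivity)⟩
  · rintro ⟨hu, hv⟩
    obtain ⟨x₁, x₂, hx₁, hx₂, hp, hq⟩ :=
      exists_rpow_mul_rpow_eq hD (div_pos (hu₀.2 hu) hc) (div_pos (hv₀.2 hv) hb)
    refine ⟨x₁, x₂, hx₁, hx₂, (predator_prey_rhs_eq_zero_iff hD x₁ x₂).2 ⟨?_, ?_⟩⟩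
    · rw [hp, mul_div_cancel₀ _ hc.ne']
    · rw [hq, mul_div_cancel₀ _ hb.ne']
  · intro x₁ x₂ y₁ y₂ hx₁ hx₂ hx hx' hy₁ hy₂ hy hy'
    obtain ⟨hxu, hxv⟩ := (predator_prey_rhs_eq_zero_iff hD x₁ x₂).1 ⟨hx, hx'⟩
    obtain ⟨hyu, hyv⟩ := (predator_prey_rhs_eq_zero_iff hD y₁ y₂).1 ⟨hy, hy'⟩
    exact eq_of_rpow_mul_rpow_eq hD hx₁ hx₂ hy₁ hy₂
      (mul_left_cancel₀ hc.ne' (hxu.trans hyu.symm)) (mul_left_cancel₀ hb.ne' (hxv.trans hyv.symm))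

theorem generalized_predator_prey_fixed_point (a b c d α β γ δ : ℝ)
    (ha : 0 < a) (hb : 0 < b) (hc : 0 < c) (hd : 0 < d)
    (hα : 0 < α) (hβ : 0 < β) (hγ : 0 < γ) (hδ : 0 < δ)
    (hdet : 0 < α * δ - β * γ) :
    ((∃ x₁ x₂ : ℝ, 0 < x₁ ∧ 0 < x₂ ∧
        a - β * c * x₁ ^ α * x₂ ^ β - δ * b * x₁ ^ γ * x₂ ^ δ = 0 ∧
        -d + α * c * x₁ ^ α * x₂ ^ β + γ * b * x₁ ^ γ * x₂ ^ δ = 0) ↔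
      (δ / γ > a / d ∧ a / d > β / α)) ∧
    (∀ x₁ x₂ y₁ y₂ : ℝ,
      0 < x₁ → 0 < x₂ →
      a - β * c * x₁ ^ α * x₂ ^ β - δ * b * x₁ ^ γ * x₂ ^ δ = 0 →
      -d + α * c * x₁ ^ α * x₂ ^ β + γ * b * x₁ ^ γ * x₂ ^ δ = 0 →
      0 < y₁ → 0 < y₂ →
      a - β * c * y₁ ^ α * y₂ ^ β - δ * b * y₁ ^ γ * y₂ ^ δ = 0 →
      -d + α * c * y₁ ^ α * y₂ ^ β + γ * b * y₁ ^ γ * y₂ ^ δ = 0 →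
      x₁ = y₁ ∧ x₂ = y₂) :=
  generalized_predator_prey_fixed_point_general a b c d α β γ δ hb hc hd hα hγ hdet
end

section
/- The function H(x₁,x₂) = -c x₁^α x₂^β - b x₁^γ x₂^δ + d ln x₁ + a ln x₂ is a first integral of the system ẋ₁ = x₁(a - βc x₁^α x₂^β - δb x₁^γ x₂^δ), ẋ₂ = x₂(-d + αc x₁^α x₂^β + γb x₁^γ x₂^δ) on the open positive quadrant. -/
open Real

theorem generalized_predator_prey_first_integral (a b c d α β γ δ : ℝ)
    (H : ℝ → ℝ → ℝ)
    (hH : H = fun x₁ x₂ =>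
      -c * x₁ ^ α * x₂ ^ β - b * x₁ ^ γ * x₂ ^ δ + d * Real.log x₁ + a * Real.log x₂) :
    ∀ x₁ x₂ : ℝ, 0 < x₁ → 0 < x₂ →
      deriv (fun s => H s x₂) x₁ *
          (x₁ * (a - β * c * x₁ ^ α * x₂ ^ β - δ * b * x₁ ^ γ * x₂ ^ δ))
        + deriv (fun s => H x₁ s) x₂ *
          (x₂ * (-d + α * c * x₁ ^ α * x₂ ^ β + γ * b * x₁ ^ γ * x₂ ^ δ)) = 0 := by
  intro x₁ x₂ h1 h2
  subst hH
  have d1 : HasDerivAt (fun s : ℝ =>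
      -c * s ^ α * x₂ ^ β - b * s ^ γ * x₂ ^ δ + d * Real.log s + a * Real.log x₂)
      (-c * (α * x₁ ^ (α - 1)) * x₂ ^ β - b * (γ * x₁ ^ (γ - 1)) * x₂ ^ δ
        + d * x₁⁻¹ + 0) x₁ := by
    have hα := (Real.hasDerivAt_rpow_const (x := x₁) (p := α) (Or.inl h1.ne')).const_mul (-c)
    have hγ := (Real.hasDerivAt_rpow_const (x := x₁) (p := γ) (Or.inl h1.ne')).const_mul (-b)
    have hl := (Real.hasDerivAt_log h1.ne').const_mul d
    exact (((hα.mul_const (x₂ ^ β)).sub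
      ((Real.hasDerivAt_rpow_const (x := x₁) (p := γ) (Or.inl h1.ne')).const_mul b
        |>.mul_const (x₂ ^ δ))).add hl).add (hasDerivAt_const _ _)
  have d2 : HasDerivAt (fun s : ℝ =>
      -c * x₁ ^ α * s ^ β - b * x₁ ^ γ * s ^ δ + d * Real.log x₁ + a * Real.log s)
      (-c * x₁ ^ α * (β * x₂ ^ (β - 1)) - b * x₁ ^ γ * (δ * x₂ ^ (δ - 1))
        + 0 + a * x₂⁻¹) x₂ := by
    have hβ := (Real.hasDerivAt_rpow_const (x := x₂) (p := β) (Or.inl h2.ne')).const_mul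
      (-c * x₁ ^ α)
    have hδ := (Real.hasDerivAt_rpow_const (x := x₂) (p := δ) (Or.inl h2.ne')).const_mul
      (b * x₁ ^ γ)
    have hl := (Real.hasDerivAt_log h2.ne').const_mul a
    exact ((hβ.sub hδ).add (hasDerivAt_const _ _)).add hl
  rw [show (fun s => -c * s ^ α * x₂ ^ β - b * s ^ γ * x₂ ^ δ + d * Real.log s
        + a * Real.log x₂) = (fun s : ℝ =>
      -c * s ^ α * x₂ ^ β - b * s ^ γ * x₂ ^ δ + d * Real.log s + a * Real.log x₂) from rfl]
  rw [d1.deriv, d2.deriv]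
  have e1 : x₁ ^ (α - 1) = x₁ ^ α / x₁ := by
    rw [Real.rpow_sub h1, Real.rpow_one]
  have e2 : x₁ ^ (γ - 1) = x₁ ^ γ / x₁ := by
    rw [Real.rpow_sub h1, Real.rpow_one]
  have e3 : x₂ ^ (β - 1) = x₂ ^ β / x₂ := by
    rw [Real.rpow_sub h2, Real.rpow_one]
  have e4 : x₂ ^ (δ - 1) = x₂ ^ δ / x₂ := by
    rw [Real.rpow_sub h2, Real.rpow_one]
  rw [e1, e2, e3, e4]
  field_simp
  ring
end

section
/- For Nutku's system with abc = -1, ν = μb - ρab, and a < 0, b < 0, c < 0, every fixed point in the open positive octant is Lyapunov stable. -/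
open Real Finset

/-- Entropy-type inequality: `s ↦ s - m * log s` has a minimum at `s = m`. -/
lemma nutku_entropy_le {m s : ℝ} (hm : 0 < m) (hs : 0 < s) :
    m - m * Real.log m ≤ s - m * Real.log s := by
  have h := Real.log_le_sub_one_of_pos (div_pos hs hm)
  rw [Real.log_div hs.ne' hm.ne'] at h
  have h2 : (Real.log s - Real.log m + 1) * m ≤ s := by
    rw [← le_div_iff₀ hm]; linarith
  nlinarith [h2]

lemma nutku_entropy_lt {m s : ℝ} (hm : 0 < m) (hs : 0 < s) (hne : s ≠ m) :
    m - m * Real.log m < s - m * Real.log s := by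
  have hne1 : s / m ≠ 1 := by
    rw [Ne, div_eq_one_iff_eq hm.ne']; exact hne
  have h := Real.log_lt_sub_one_of_pos (div_pos hs hm) hne1
  rw [Real.log_div hs.ne' hm.ne'] at h
  have h2 : (Real.log s - Real.log m + 1) * m < s := by
    rw [← lt_div_iff₀ hm]; linarith
  nlinarith [h2]

theorem nutku_fixed_points_stable (a b c ρ μ ν : ℝ)
    (habc : a * b * c = -1) (hν : ν = μ * b - ρ * a * b)
    (ha : a < 0) (hb : b < 0) (hc : c < 0)
    (F : (Fin 3 → ℝ) → (Fin 3 → ℝ))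
    (hF : F = fun x => ![x 0 * (ρ + c * x 1 + x 2),
                         x 1 * (μ + x 0 + a * x 2),
                         x 2 * (ν + b * x 0 + x 1)])
    (x₀ : Fin 3 → ℝ) (hx₀pos : ∀ i, 0 < x₀ i) (hfix : F x₀ = 0) :
    ∀ ε > (0:ℝ), ∃ δ > (0:ℝ), ∀ x : ℝ → (Fin 3 → ℝ),
      (∀ t : ℝ, 0 ≤ t → HasDerivAt x (F (x t)) t) →
      ‖x 0 - x₀‖ < δ → ∀ t > (0:ℝ), ‖x t - x₀‖ < ε := by
  have hab : 0 < a * b := mul_pos_of_neg_of_neg ha hb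
  have hna : 0 < -a := neg_pos.mpr ha
  -- fixed point equations
  have e1 : ρ + c * x₀ 1 + x₀ 2 = 0 := by
    have h := congrFun hfix 0
    simp [hF] at h
    exact h.resolve_left (ne_of_gt (hx₀pos 0))
  have e2 : μ + x₀ 0 + a * x₀ 2 = 0 := by
    have h := congrFun hfix 1
    simp [hF] at h
    exact h.resolve_left (ne_of_gt (hx₀pos 1))
  have e3 : ν + b * x₀ 0 + x₀ 1 = 0 := by
    have h := congrFun hfix 2
    simp [hF] at h
    exact h.resolve_left (ne_of_gt (hx₀pos 2))
  -- the energy-Casimir / Lyapunov function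
  set W : (Fin 3 → ℝ) → ℝ := fun y =>
      a * b * (y 0 - x₀ 0 * Real.log (y 0)) + (y 1 - x₀ 1 * Real.log (y 1)) +
        -a * (y 2 - x₀ 2 * Real.log (y 2)) with hWdef
  -- W has a strict minimum over the positive octant at x₀
  have hWpos : ∀ y : Fin 3 → ℝ, (∀ i, 0 < y i) → y ≠ x₀ → W x₀ < W y := by
    intro y hy hne
    have hne3 : y 0 ≠ x₀ 0 ∨ y 1 ≠ x₀ 1 ∨ y 2 ≠ x₀ 2 := by
      by_contra h
      push_neg at h
      exact hne (funext fun i => by fin_cases i <;> simp [h.1, h.2.1, h.2.2])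
    have T0 : ∀ i, x₀ i - x₀ i * Real.log (x₀ i) ≤ y i - x₀ i * Real.log (y i) :=
      fun i => nutku_entropy_le (hx₀pos i) (hy i)
    have h0 := T0 0; have h1 := T0 1; have h2 := T0 2
    simp only [hWdef]
    rcases hne3 with hi | hi | hi
    · have T1 := nutku_entropy_lt (hx₀pos 0) (hy 0) hi
      have := mul_lt_mul_of_pos_left T1 hab
      have := mul_le_mul_of_nonneg_left h2 hna.le
      linarith
    · have T1 := nutku_entropy_lt (hx₀pos 1) (hy 1) hi
      have := mul_le_mul_of_nonneg_left h0 hab.le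
      have := mul_le_mul_of_nonneg_left h2 hna.le
      linarith
    · have T1 := nutku_entropy_lt (hx₀pos 2) (hy 2) hi
      have := mul_le_mul_of_nonneg_left h0 hab.le
      have := mul_lt_mul_of_pos_left T1 hna
      linarith
  -- W is continuous at positive points
  have hWcont : ∀ y : Fin 3 → ℝ, (∀ i, 0 < y i) → ContinuousAt W y := by
    intro y hy
    have hl : ∀ i : Fin 3, ContinuousAt (fun z : Fin 3 → ℝ => Real.log (z i)) y :=
      fun i => (continuous_apply i).continuousAt.log (ne_of_gt (hy i))
    exact ((((continuous_apply 0).continuousAt.sub ((hl 0).const_mul _)).const_mul _).add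
      ((continuous_apply 1).continuousAt.sub ((hl 1).const_mul _))).add
      (((continuous_apply 2).continuousAt.sub ((hl 2).const_mul _)).const_mul _)
  intro ε hε
  set r : ℝ := min ε (min (x₀ 0) (min (x₀ 1) (x₀ 2)) / 2) with hrdef
  have hmin0 : 0 < min (x₀ 0) (min (x₀ 1) (x₀ 2)) :=
    lt_min (hx₀pos 0) (lt_min (hx₀pos 1) (hx₀pos 2))
  have hr : 0 < r := lt_min hε (by linarith)
  have hrε : r ≤ ε := min_le_left _ _
  have hrx : ∀ i : Fin 3, r < x₀ i := by
    intro i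
    have h2 : r ≤ min (x₀ 0) (min (x₀ 1) (x₀ 2)) / 2 := min_le_right _ _
    have h3 : min (x₀ 0) (min (x₀ 1) (x₀ 2)) ≤ x₀ i := by
      fin_cases i
      · exact min_le_left _ _
      · exact le_trans (min_le_right _ _) (min_le_left _ _)
      · exact le_trans (min_le_right _ _) (min_le_right _ _)
    linarith
  -- points in the closed ball of radius r have positive coordinates
  have hball : ∀ y : Fin 3 → ℝ, ‖y - x₀‖ ≤ r → ∀ i, 0 < y i := by
    intro y hy i
    have h1 : |y i - x₀ i| ≤ ‖y - x₀‖ := by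
      simpa using norm_le_pi_norm (y - x₀) i
    have := (abs_le.mp (h1.trans hy)).1
    linarith [hrx i]
  -- minimum of W on the sphere of radius r
  have hsne : (Metric.sphere x₀ r).Nonempty := NormedSpace.sphere_nonempty.mpr hr.le
  have hWc : ContinuousOn W (Metric.sphere x₀ r) := by
    intro y hy
    have : ‖y - x₀‖ = r := by rwa [Metric.mem_sphere, dist_eq_norm] at hy
    exact (hWcont y (hball y this.le)).continuousWithinAt
  obtain ⟨p, hp, hpmin⟩ := (isCompact_sphere x₀ r).exists_isMinOn hsne hWc
  have hpnorm : ‖p - x₀‖ = r := by rwa [Metric.mem_sphere, dist_eq_norm] at hp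
  have hpx : ∀ i, 0 < p i := hball p hpnorm.le
  have hpne : p ≠ x₀ := by
    intro h
    rw [h, sub_self, norm_zero] at hpnorm
    exact hr.ne hpnorm
  set m : ℝ := W p - W x₀ with hmdef
  have hm : 0 < m := sub_pos.mpr (hWpos p hpx hpne)
  obtain ⟨δ₀, hδ₀, hδ₀p⟩ := Metric.continuousAt_iff.mp (hWcont x₀ hx₀pos) m hm
  refine ⟨min δ₀ r, lt_min hδ₀ hr, ?_⟩
  intro x hxode hinit t ht
  by_contra hcon
  push_neg at hcon
  -- the first-exit argument
  set B : Set ℝ := {s : ℝ | 0 ≤ s ∧ r ≤ ‖x s - x₀‖} with hBdef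
  have hBne : B.Nonempty := ⟨t, ht.le, le_trans hrε hcon⟩
  have hBbdd : BddBelow B := ⟨0, fun s hs => hs.1⟩
  set t₁ : ℝ := sInf B with ht₁def
  have ht₁0 : 0 ≤ t₁ := le_csInf hBne fun s hs => hs.1
  have hxc : ∀ s : ℝ, 0 ≤ s → ContinuousAt x s := fun s hs => (hxode s hs).continuousAt
  have hinit' : ‖x 0 - x₀‖ < r := lt_of_lt_of_le hinit (min_le_right _ _)
  have hgt₁ : r ≤ ‖x t₁ - x₀‖ := by
    have hcl : t₁ ∈ closure B := csInf_mem_closure hBne hBbdd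
    haveI : (nhdsWithin t₁ B).NeBot := mem_closure_iff_nhdsWithin_neBot.mp hcl
    have hcw : ContinuousWithinAt (fun s => ‖x s - x₀‖) B t₁ :=
      (((hxc t₁ ht₁0).sub continuousAt_const).norm).continuousWithinAt
    exact ge_of_tendsto hcw.tendsto (eventually_mem_nhdsWithin.mono fun s hs => hs.2)
  have ht₁pos : 0 < t₁ := by
    rcases ht₁0.lt_or_eq with h | h
    · exact h
    · rw [← h] at hgt₁; linarith
  have hlt : ∀ s : ℝ, 0 ≤ s → s < t₁ → ‖x s - x₀‖ < r := by
    intro s hs0 hst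
    by_contra h
    push_neg at h
    exact absurd (csInf_le hBbdd ⟨hs0, h⟩) (not_le.mpr hst)
  have hgle : ‖x t₁ - x₀‖ ≤ r := by
    have hcl : t₁ ∈ closure (Set.Ico 0 t₁) := by
      rw [closure_Ico ht₁pos.ne]
      exact ⟨ht₁0, le_refl _⟩
    haveI : (nhdsWithin t₁ (Set.Ico 0 t₁)).NeBot := mem_closure_iff_nhdsWithin_neBot.mp hcl
    have hcw : ContinuousWithinAt (fun s => ‖x s - x₀‖) (Set.Ico 0 t₁) t₁ :=
      (((hxc t₁ ht₁0).sub continuousAt_const).norm).continuousWithinAt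
    exact le_of_tendsto hcw.tendsto
      (eventually_mem_nhdsWithin.mono fun s hs => (hlt s hs.1 hs.2).le)
  have hsub : ∀ s ∈ Set.Icc (0:ℝ) t₁, ‖x s - x₀‖ ≤ r := by
    rintro s ⟨hs0, hst⟩
    rcases eq_or_lt_of_le hst with rfl | h
    · exact hgle
    · exact (hlt s hs0 h).le
  have hposx : ∀ s ∈ Set.Icc (0:ℝ) t₁, ∀ i, 0 < x s i :=
    fun s hs => hball _ (hsub s hs)
  -- W is conserved along the trajectory
  have hderivAt : ∀ s ∈ Set.Icc (0:ℝ) t₁, HasDerivAt (fun t => W (x t)) 0 s := by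
    intro s hs
    have hpos := hposx s hs
    have hdx : ∀ i, HasDerivAt (fun t => x t i) (F (x s) i) s :=
      hasDerivAt_pi.mp (hxode s hs.1)
    have hl0 := (hdx 0).log (ne_of_gt (hpos 0))
    have hl1 := (hdx 1).log (ne_of_gt (hpos 1))
    have hl2 := (hdx 2).log (ne_of_gt (hpos 2))
    have hsum := ((((hdx 0).sub (hl0.const_mul (x₀ 0))).const_mul (a * b)).add
        ((hdx 1).sub (hl1.const_mul (x₀ 1)))).add
        (((hdx 2).sub (hl2.const_mul (x₀ 2))).const_mul (-a))
    have hD : a * b * (F (x s) 0 - x₀ 0 * (F (x s) 0 / x s 0)) +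
        (F (x s) 1 - x₀ 1 * (F (x s) 1 / x s 1)) +
        -a * (F (x s) 2 - x₀ 2 * (F (x s) 2 / x s 2)) = 0 := by
      simp only [hF]
      simp only [Matrix.cons_val_zero, Matrix.cons_val_one, Matrix.head_cons,
        Matrix.cons_val_two, Matrix.tail_cons]
      rw [mul_div_cancel_left₀ _ (ne_of_gt (hpos 0)),
        mul_div_cancel_left₀ _ (ne_of_gt (hpos 1)),
        mul_div_cancel_left₀ _ (ne_of_gt (hpos 2))]
      linear_combination (a * b * (x s 0 - x₀ 0)) * e1 + (x s 1 - x₀ 1) * e2 +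
        (-a * (x s 2 - x₀ 2)) * e3 + ((x s 0 - x₀ 0) * (x s 1 - x₀ 1)) * habc
    rw [hD] at hsum
    exact hsum
  have hcontWx : ContinuousOn (fun t => W (x t)) (Set.Icc (0:ℝ) t₁) :=
    fun s hs => ((hWcont (x s) (hposx s hs)).comp (hxc s hs.1)).continuousWithinAt
  have hconst := constant_of_has_deriv_right_zero hcontWx
    (fun s hs => (hderivAt s ⟨hs.1, hs.2.le⟩).hasDerivWithinAt) t₁
    ⟨ht₁0, le_refl _⟩
  -- contradiction: W (x t₁) = W (x 0) is both < W x₀ + m and ≥ W x₀ + m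
  have h1 : W (x 0) - W x₀ < m := by
    have := hδ₀p (show dist (x 0) x₀ < δ₀ by
      rw [dist_eq_norm]; exact lt_of_lt_of_le hinit (min_le_left _ _))
    rw [Real.dist_eq] at this
    exact lt_of_le_of_lt (le_abs_self _) this
  have hxt₁sphere : x t₁ ∈ Metric.sphere x₀ r := by
    rw [Metric.mem_sphere, dist_eq_norm]
    exact le_antisymm hgle hgt₁
  have h2 : m ≤ W (x t₁) - W x₀ := sub_le_sub_right (hpmin hxt₁sphere) _
  rw [hconst] at h2
  linarith
end

section
/- Let λ₁, λ₂ > 0 and consider the planar Hamiltonian system with H(ξ₁,ξ₂) = λ₁ξ₁² + λ₂ξ₂² and equations ξ̇₁ = ∂H/∂ξ₂, ξ̇₂ = -∂H/∂ξ₁. Rotating coordinates by angle φ, the resulting components ε₁, ε₂ of the solution oscillate with a phase shift Φ(ρ,φ) = π/2 + arctan(ρ tan φ) - arctan(ρ⁻¹ tan φ), where ρ = √(λ₁/λ₂), for φ ∈ (-π/2, π/2). -/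
open Real

/-!
With `u = ρ ξ₁` and `v = ξ₂` the system becomes `u' = ω v`, `v' = -ω u`, so `(u, v)` rotates
uniformly: `u = R cos (ω t - θ)`, `v = -R sin (ω t - θ)`. Each `εᵢ` is then of the form
`A cos x + B sin x` with `A > 0` (for `ε₂` after shifting `x` by `π / 2`), which equals
`√(A² + B²) cos (x - arctan (B / A))`; the two ratios `B / A` are `ρ tan φ` and `ρ⁻¹ tan φ`.
-/

theorem rotation_flow_eq {ω : ℝ} {u v : ℝ → ℝ}
    (hu : ∀ t, HasDerivAt u (ω * v t) t) (hv : ∀ t, HasDerivAt v (-(ω * u t)) t) (t : ℝ) :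
    u t = u 0 * cos (ω * t) + v 0 * sin (ω * t) ∧
      v t = v 0 * cos (ω * t) - u 0 * sin (ω * t) := by
  have hωt (t : ℝ) : HasDerivAt (fun t => ω * t) ω t := by
    simpa using (hasDerivAt_id t).const_mul ω
  have hcos (t : ℝ) : HasDerivAt (fun t => cos (ω * t)) (-sin (ω * t) * ω) t :=
    (hasDerivAt_cos (ω * t)).comp t (hωt t)
  have hsin (t : ℝ) : HasDerivAt (fun t => sin (ω * t)) (cos (ω * t) * ω) t :=
    (hasDerivAt_sin (ω * t)).comp t (hωt t)
  have const_of_deriv_zero {f : ℝ → ℝ} (hf : ∀ t, HasDerivAt f 0 t) : f t = f 0 :=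
    is_const_of_deriv_eq_zero (fun t => (hf t).differentiableAt) (fun t => (hf t).deriv) t 0
  -- `(u, v)` rotated back by the angle `ω t` stays at its initial value
  have hF := const_of_deriv_zero (f := fun t => u t * cos (ω * t) - v t * sin (ω * t))
    (fun t => (((hu t).mul (hcos t)).sub ((hv t).mul (hsin t))).congr_deriv (by ring))
  have hG := const_of_deriv_zero (f := fun t => u t * sin (ω * t) + v t * cos (ω * t))
    (fun t => (((hu t).mul (hsin t)).add ((hv t).mul (hcos t))).congr_deriv (by ring))
  simp only [mul_zero, cos_zero, sin_zero, mul_one, sub_zero, zero_add] at hF hG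
  have hpyth := sin_sq_add_cos_sq (ω * t)
  constructor
  · linear_combination cos (ω * t) * hF + sin (ω * t) * hG - u t * hpyth
  · linear_combination cos (ω * t) * hG - sin (ω * t) * hF - v t * hpyth

theorem exists_amplitude_phase_of_rotation_flow {ω : ℝ} {u v : ℝ → ℝ}
    (hu : ∀ t, HasDerivAt u (ω * v t) t) (hv : ∀ t, HasDerivAt v (-(ω * u t)) t)
    (h₀ : u 0 ≠ 0 ∨ v 0 ≠ 0) :
    ∃ R > 0, ∃ θ, ∀ t, u t = R * cos (ω * t - θ) ∧ v t = -(R * sin (ω * t - θ)) := by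
  set z : ℂ := ⟨u 0, v 0⟩
  have hz : z ≠ 0 := fun hz => h₀.elim (· (congrArg Complex.re hz)) (· (congrArg Complex.im hz))
  refine ⟨‖z‖, norm_pos_iff.2 hz, z.arg, fun t => ?_⟩
  have hre : ‖z‖ * cos z.arg = u 0 := Complex.norm_mul_cos_arg z
  have him : ‖z‖ * sin z.arg = v 0 := Complex.norm_mul_sin_arg z
  obtain ⟨hut, hvt⟩ := rotation_flow_eq hu hv t
  rw [cos_sub, sin_sub]
  constructor
  · rw [hut, ← hre, ← him]; ring
  · rw [hvt, ← hre, ← him]; ring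

theorem mul_cos_add_mul_sin_eq_sqrt_mul_cos_sub_arctan {A : ℝ} (hA : 0 < A) (B x : ℝ) :
    A * cos x + B * sin x = √(A ^ 2 + B ^ 2) * cos (x - arctan (B / A)) := by
  have hsqrt : √(A ^ 2 + B ^ 2) = A * √(1 + (B / A) ^ 2) := by
    rw [← sqrt_sq hA.le, ← sqrt_mul (sq_nonneg A), sqrt_sq hA.le]
    congr 1; field_simp
  have hpos : 0 < √(1 + (B / A) ^ 2) := sqrt_pos.2 (by positivity)
  rw [cos_sub, cos_arctan, sin_arctan, hsqrt]
  field_simp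

theorem sqrt_div_mul_self {a b : ℝ} (hb : 0 < b) : √(a / b) * b = √(a * b) := by
  rw [← sqrt_sq hb.le, ← sqrt_mul' _ (sq_nonneg b), sqrt_sq hb.le]
  congr 1; field_simp

theorem sqrt_mul_mul_sqrt_div {a b : ℝ} (ha : 0 ≤ a) (hb : 0 < b) : √(a * b) * √(a / b) = a := by
  rw [← sqrt_mul' _ (div_nonneg ha hb.le), show a * b * (a / b) = a ^ 2 by field_simp,
    sqrt_sq ha]

theorem rotated_oscillation_phase_shift (lam1 lam2 : ℝ)
    (h1 : 0 < lam1) (h2 : 0 < lam2)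
    (φ : ℝ) (hφ : φ ∈ Set.Ioo (-(π / 2)) (π / 2))
    (ρ ω : ℝ) (hρ : ρ = Real.sqrt (lam1 / lam2)) (hω : ω = 2 * Real.sqrt (lam1 * lam2))
    (ξ₁ ξ₂ : ℝ → ℝ)
    (hode1 : ∀ t : ℝ, HasDerivAt ξ₁ (2 * lam2 * ξ₂ t) t)
    (hode2 : ∀ t : ℝ, HasDerivAt ξ₂ (-(2 * lam1 * ξ₁ t)) t)
    (hnontriv : ξ₁ 0 ≠ 0 ∨ ξ₂ 0 ≠ 0)
    (ε₁ ε₂ : ℝ → ℝ)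
    (hε1 : ∀ t, ε₁ t = Real.cos φ * ξ₁ t - Real.sin φ * ξ₂ t)
    (hε2 : ∀ t, ε₂ t = Real.sin φ * ξ₁ t + Real.cos φ * ξ₂ t) :
    ∃ A₁ A₂ θ₁ θ₂ : ℝ, 0 < A₁ ∧ 0 < A₂ ∧
      (∀ t, ε₁ t = A₁ * Real.cos (ω * t + θ₁)) ∧
      (∀ t, ε₂ t = A₂ * Real.cos (ω * t + θ₂)) ∧
      θ₂ - θ₁ = π / 2 + Real.arctan (ρ * Real.tan φ) - Real.arctan (ρ⁻¹ * Real.tan φ) := by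
  have hρpos : 0 < ρ := hρ ▸ sqrt_pos.2 (div_pos h1 h2)
  have hc : 0 < cos φ := cos_pos_of_mem_Ioo hφ
  have hρω : ρ * (2 * lam2) = ω := by rw [hρ, hω, ← sqrt_div_mul_self h2]; ring
  have hωρ : ω * ρ = 2 * lam1 := by rw [hρ, hω, mul_assoc, sqrt_mul_mul_sqrt_div h1.le h2]
  obtain ⟨R, hR, θ, hpolar⟩ := exists_amplitude_phase_of_rotation_flow (u := fun t => ρ * ξ₁ t) (ω := ω)
    (fun t => ((hode1 t).const_mul ρ).congr_deriv (by rw [← hρω]; ring))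
    (fun t => (hode2 t).congr_deriv (by rw [← hωρ]; ring))
    (hnontriv.imp_left (mul_ne_zero hρpos.ne'))
  have hξ₁ (t : ℝ) : ξ₁ t = R * cos (ω * t - θ) / ρ := by
    rw [eq_div_iff hρpos.ne', mul_comm, (hpolar t).1]
  have htan : tan φ = sin φ / cos φ := tan_eq_sin_div_cos φ
  refine ⟨R * √((cos φ / ρ) ^ 2 + sin φ ^ 2), R * √(cos φ ^ 2 + (sin φ / ρ) ^ 2),
    -θ - arctan (ρ * tan φ), π / 2 - θ - arctan (ρ⁻¹ * tan φ),
    by positivity, by positivity, fun t => ?_, fun t => ?_, by ring⟩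
  · have hphasor := mul_cos_add_mul_sin_eq_sqrt_mul_cos_sub_arctan (div_pos hc hρpos) (sin φ)
      (ω * t - θ)
    rw [show sin φ / (cos φ / ρ) = ρ * tan φ by rw [htan]; field_simp] at hphasor
    calc ε₁ t = R * (cos φ / ρ * cos (ω * t - θ) + sin φ * sin (ω * t - θ)) := by
          rw [hε1, hξ₁, (hpolar t).2]; ring
      _ = _ := by rw [hphasor]; ring_nf
  · have hphasor := mul_cos_add_mul_sin_eq_sqrt_mul_cos_sub_arctan hc (sin φ / ρ)
      (ω * t - θ + π / 2)
    rw [show sin φ / ρ / cos φ = ρ⁻¹ * tan φ by rw [htan]; field_simp] at hphasor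
    calc ε₂ t = R * (cos φ * cos (ω * t - θ + π / 2) + sin φ / ρ * sin (ω * t - θ + π / 2)) := by
          rw [hε2, hξ₁, (hpolar t).2, cos_add_pi_div_two, sin_add_pi_div_two]; ring
      _ = _ := by rw [hphasor]; ring_nf
end
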